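/- arXiv:2505.13114 — 3 statements merged into one kernel-verified Lean document; each statement's English description precedes it below -/
import Mathlib

section
/- For all θ₁ ∈ ℝ and θ₂ ≠ 0, det Ω(θ₁,θ₂) = 1/(16·θ₂⁶); in particular Ω(θ₁,θ₂) is invertible, i.e., the fundamental 2-form is nondegenerate. -/
open Matrix

/-- The fundamental 2-form of the lognormal Kähler structure is nondegenerate:
`det Ω = 1/(16 θ₂⁶) ≠ 0`. -/
theorem lognormal_fundamental_form_nondegenerate
    (θ₁ θ₂ : ℝ) (hθ₂ : θ₂ ≠ 0)
    (G J₀ Ω : Matrix (Fin 4) (Fin 4) ℝ)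
    (hG : G = !![-1 / (2 * θ₂), θ₁ / (2 * θ₂ ^ 2), 0, 0;
                 θ₁ / (2 * θ₂ ^ 2), -(θ₁ ^ 2 - θ₂) / (2 * θ₂ ^ 3), 0, 0;
                 0, 0, -1 / (2 * θ₂), θ₁ / (2 * θ₂ ^ 2);
                 0, 0, θ₁ / (2 * θ₂ ^ 2), -(θ₁ ^ 2 - θ₂) / (2 * θ₂ ^ 3)])
    (hJ₀ : J₀ = !![0, 0, -1, 0;
                   0, 0, 0, -1;
                   1, 0, 0, 0;
                   0, 1, 0, 0])
    (hΩ : Ω = J₀ᵀ * G) :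
    Ω.det = 1 / (16 * θ₂ ^ 6) ∧ IsUnit Ω.det := by
  have hdet : Ω.det = 1 / (16 * θ₂ ^ 6) := by
    subst hG hJ₀ hΩ
    rw [det_mul, det_transpose]
    simp [Matrix.det_succ_row_zero, Fin.sum_univ_succ, Fin.succAbove]
    field_simp
    ring
  refine ⟨hdet, ?_⟩
  rw [hdet]
  simp [isUnit_iff_ne_zero, hθ₂]
end

section
/- Regard the entries Ω_{ij} of Ω as smooth functions of (x₁,x₂,x₃,x₄) = (θ₁,θ₂,θ̇₁,θ̇₂) on the open set {θ₂ < 0} ⊆ ℝ⁴ (they depend only on x₁ and x₂). Then for all indices i, j, k ∈ {1,2,3,4} and all points of this set, ∂Ω_{ij}/∂x_k + ∂Ω_{jk}/∂x_i + ∂Ω_{ki}/∂x_j = 0; i.e., the fundamental 2-form ω = (1/2)·Σ Ω_{ij} dx_i ∧ dx_j is closed. -/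
lemma d1 {b : ℝ} (hb : b ≠ 0) : deriv (fun t : ℝ => -1 / (2 * t)) b = 1 / (2 * b ^ 2) := by
  have h : HasDerivAt (fun t : ℝ => -1 / (2 * t)) (1 / (2 * b ^ 2)) b := by
    have := ((hasDerivAt_const b (-1 : ℝ)).div ((hasDerivAt_id b).const_mul 2)
      (by simpa using hb))
    refine this.congr_deriv ?_
    simp only [id]
    field_simp
    ring
  exact h.deriv

lemma d2 {b : ℝ} (hb : b ≠ 0) : deriv (fun t : ℝ => 1 / (2 * t)) b = -(1 / (2 * b ^ 2)) := by
  have h : HasDerivAt (fun t : ℝ => 1 / (2 * t)) (-(1 / (2 * b ^ 2))) b := by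
    have := ((hasDerivAt_const b (1 : ℝ)).div ((hasDerivAt_id b).const_mul 2)
      (by simpa using hb))
    refine this.congr_deriv ?_
    simp only [id]
    field_simp
    ring
  exact h.deriv

lemma d3 (c b : ℝ) : deriv (fun t : ℝ => t / c) b = 1 / c := by
  have h : HasDerivAt (fun t : ℝ => t / c) (1 / c) b := by
    simpa using (hasDerivAt_id b).div_const c
  exact h.deriv

lemma d4 (c b : ℝ) : deriv (fun t : ℝ => -t / c) b = -(1 / c) := by
  have h : HasDerivAt (fun t : ℝ => -t / c) (-(1 / c)) b := by
    simpa [neg_div] using (hasDerivAt_neg b).div_const c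
  exact h.deriv

lemma d5 (a c b : ℝ) : deriv (fun t : ℝ => -(t ^ 2 - a) / c) b = -(2 * b) / c := by
  have h : HasDerivAt (fun t : ℝ => -(t ^ 2 - a) / c) (-(2 * b) / c) b := by
    have := (((hasDerivAt_pow 2 b).sub_const a).neg).div_const c
    simpa [neg_div] using this
  exact h.deriv

lemma d6 (a c b : ℝ) : deriv (fun t : ℝ => (t ^ 2 - a) / c) b = (2 * b) / c := by
  have h : HasDerivAt (fun t : ℝ => (t ^ 2 - a) / c) ((2 * b) / c) b := by
    simpa using ((hasDerivAt_pow 2 b).sub_const a).div_const c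
  exact h.deriv

lemma d7 (a : ℝ) {b : ℝ} (hb : b ≠ 0) :
    deriv (fun t : ℝ => a / (2 * t ^ 2)) b = -a / b ^ 3 := by
  have h : HasDerivAt (fun t : ℝ => a / (2 * t ^ 2)) (-a / b ^ 3) b := by
    have := (hasDerivAt_const b a).div ((hasDerivAt_pow 2 b).const_mul 2)
      (by simp [pow_eq_zero_iff, hb])
    refine this.congr_deriv ?_
    field_simp
    ring
  exact h.deriv

lemma d8 (a : ℝ) {b : ℝ} (hb : b ≠ 0) :
    deriv (fun t : ℝ => -a / (2 * t ^ 2)) b = a / b ^ 3 := by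
  have h : HasDerivAt (fun t : ℝ => -a / (2 * t ^ 2)) (a / b ^ 3) b := by
    have := (hasDerivAt_const b (-a)).div ((hasDerivAt_pow 2 b).const_mul 2)
      (by simp [pow_eq_zero_iff, hb])
    refine this.congr_deriv ?_
    field_simp
    ring
  exact h.deriv

lemma d9 (a : ℝ) {b : ℝ} (hb : b ≠ 0) :
    deriv (fun t : ℝ => -(a ^ 2 - t) / (2 * t ^ 3)) b = (3 * a ^ 2 - 2 * b) / (2 * b ^ 4) := by
  have h : HasDerivAt (fun t : ℝ => -(a ^ 2 - t) / (2 * t ^ 3))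
      ((3 * a ^ 2 - 2 * b) / (2 * b ^ 4)) b := by
    have := (((hasDerivAt_id b).const_sub (a ^ 2)).neg).div
      ((hasDerivAt_pow 3 b).const_mul 2) (by simp [pow_eq_zero_iff, hb])
    refine this.congr_deriv ?_
    simp only [id, Pi.neg_apply]
    field_simp
    ring
  exact h.deriv

lemma d10 (a : ℝ) {b : ℝ} (hb : b ≠ 0) :
    deriv (fun t : ℝ => (a ^ 2 - t) / (2 * t ^ 3)) b = -((3 * a ^ 2 - 2 * b) / (2 * b ^ 4)) := by
  have h : HasDerivAt (fun t : ℝ => (a ^ 2 - t) / (2 * t ^ 3))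
      (-((3 * a ^ 2 - 2 * b) / (2 * b ^ 4))) b := by
    have := ((hasDerivAt_id b).const_sub (a ^ 2)).div
      ((hasDerivAt_pow 3 b).const_mul 2) (by simp [pow_eq_zero_iff, hb])
    refine this.congr_deriv ?_
    simp only [id]
    field_simp
    ring
  exact h.deriv

/-- The fundamental 2-form of the lognormal Kähler structure is closed: the cyclic sum
`∂Ω_{ij}/∂x_k + ∂Ω_{jk}/∂x_i + ∂Ω_{ki}/∂x_j` vanishes on `{θ₂ < 0}`, where the entries
`Ω_{ij}` are regarded as functions of `(x₁,x₂,x₃,x₄) = (θ₁,θ₂,θ̇₁,θ̇₂)`. -/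
theorem lognormal_fundamental_form_closed
    (Ωf : Fin 4 → Fin 4 → (Fin 4 → ℝ) → ℝ)
    (hΩf : ∀ (i j : Fin 4) (x : Fin 4 → ℝ),
      Ωf i j x =
        (!![0, 0, -1 / (2 * x 1), x 0 / (2 * (x 1) ^ 2);
            0, 0, x 0 / (2 * (x 1) ^ 2), -((x 0) ^ 2 - x 1) / (2 * (x 1) ^ 3);
            1 / (2 * x 1), -x 0 / (2 * (x 1) ^ 2), 0, 0;
            -x 0 / (2 * (x 1) ^ 2), ((x 0) ^ 2 - x 1) / (2 * (x 1) ^ 3), 0, 0] :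
          Matrix (Fin 4) (Fin 4) ℝ) i j)
    (pd : Fin 4 → ((Fin 4 → ℝ) → ℝ) → (Fin 4 → ℝ) → ℝ)
    (hpd : ∀ (k : Fin 4) (f : (Fin 4 → ℝ) → ℝ) (x : Fin 4 → ℝ),
      pd k f x = deriv (fun t => f (Function.update x k t)) (x k)) :
    ∀ (i j k : Fin 4) (x : Fin 4 → ℝ), x 1 < 0 →
      pd k (Ωf i j) x + pd i (Ωf j k) x + pd j (Ωf k i) x = 0 := by
  intro i j k x hx
  have hb : x 1 ≠ 0 := ne_of_lt hx
  have e01 : (0 : Fin 4) ≠ 1 := by decide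
  have e02 : (0 : Fin 4) ≠ 2 := by decide
  have e03 : (0 : Fin 4) ≠ 3 := by decide
  have e10 : (1 : Fin 4) ≠ 0 := by decide
  have e12 : (1 : Fin 4) ≠ 2 := by decide
  have e13 : (1 : Fin 4) ≠ 3 := by decide
  have h00 : ∀ y : Fin 4 → ℝ, Ωf 0 0 y = 0 := fun y => by rw [hΩf]; norm_num [Matrix.vecHead, Matrix.vecTail]
  have h01 : ∀ y : Fin 4 → ℝ, Ωf 0 1 y = 0 := fun y => by rw [hΩf]; norm_num [Matrix.vecHead, Matrix.vecTail]
  have h02 : ∀ y : Fin 4 → ℝ, Ωf 0 2 y = -1 / (2 * y 1) := fun y => by rw [hΩf]; simp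
  have h03 : ∀ y : Fin 4 → ℝ, Ωf 0 3 y = y 0 / (2 * y 1 ^ 2) := fun y => by rw [hΩf]; simp
  have h10 : ∀ y : Fin 4 → ℝ, Ωf 1 0 y = 0 := fun y => by rw [hΩf]; norm_num [Matrix.vecHead, Matrix.vecTail]
  have h11 : ∀ y : Fin 4 → ℝ, Ωf 1 1 y = 0 := fun y => by rw [hΩf]; norm_num [Matrix.vecHead, Matrix.vecTail]
  have h12 : ∀ y : Fin 4 → ℝ, Ωf 1 2 y = y 0 / (2 * y 1 ^ 2) := fun y => by rw [hΩf]; simp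
  have h13 : ∀ y : Fin 4 → ℝ, Ωf 1 3 y = -(y 0 ^ 2 - y 1) / (2 * y 1 ^ 3) := fun y => by rw [hΩf]; simp
  have h20 : ∀ y : Fin 4 → ℝ, Ωf 2 0 y = 1 / (2 * y 1) := fun y => by rw [hΩf]; simp
  have h21 : ∀ y : Fin 4 → ℝ, Ωf 2 1 y = -y 0 / (2 * y 1 ^ 2) := fun y => by rw [hΩf]; simp
  have h22 : ∀ y : Fin 4 → ℝ, Ωf 2 2 y = 0 := fun y => by rw [hΩf]; simp
  have h23 : ∀ y : Fin 4 → ℝ, Ωf 2 3 y = 0 := fun y => by rw [hΩf]; simp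
  have h30 : ∀ y : Fin 4 → ℝ, Ωf 3 0 y = -y 0 / (2 * y 1 ^ 2) := fun y => by rw [hΩf]; simp
  have h31 : ∀ y : Fin 4 → ℝ, Ωf 3 1 y = (y 0 ^ 2 - y 1) / (2 * y 1 ^ 3) := fun y => by rw [hΩf]; simp
  have h32 : ∀ y : Fin 4 → ℝ, Ωf 3 2 y = 0 := fun y => by rw [hΩf]; simp
  have h33 : ∀ y : Fin 4 → ℝ, Ωf 3 3 y = 0 := fun y => by rw [hΩf]; simp
  have h4 : ∀ m : Fin 4, m = 0 ∨ m = 1 ∨ m = 2 ∨ m = 3 := by decide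
  rcases h4 i with rfl | rfl | rfl | rfl <;> rcases h4 j with rfl | rfl | rfl | rfl <;>
    rcases h4 k with rfl | rfl | rfl | rfl <;>
  · simp only [hpd, h00, h01, h02, h03, h10, h11, h12, h13, h20, h21, h22, h23, h30, h31, h32, h33,
      Function.update_self, Function.update_of_ne, e01, e02, e03, e10, e12, e13,
      ne_eq, not_false_eq_true]
    simp only [deriv_const', deriv_const, d1 hb, d2 hb, d3, d4, d5, d6,
      d7 (x 0) hb, d8 (x 0) hb, d9 (x 0) hb, d10 (x 0) hb]
    ring
end

section
/- For θ₁ ∈ ℝ and θ₂ ≠ 0, let g_d(θ₁,θ₂) be the 4×4 block-diagonal matrix diag(H(θ₁,θ₂), h(θ₁,θ₂)) and let J_d(θ₁,θ₂) be the 4×4 matrix whose diagonal 2×2 blocks are zero, whose top-right 2×2 block is -h(θ₁,θ₂), and whose bottom-left 2×2 block is H(θ₁,θ₂). Then J_d(θ₁,θ₂)² = -I₄ and J_d(θ₁,θ₂)ᵀ·g_d(θ₁,θ₂)·J_d(θ₁,θ₂) = g_d(θ₁,θ₂). -/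
open Matrix

/-!
`h` and `H` are mutually inverse symmetric matrices (the Fisher metric in `θ` and in the
dual coordinates `η` are inverse to each other). For any such pair the antidiagonal block
matrix `J = [[0, -h], [H, 0]]` squares to `-1` and preserves `g = diag(H, h)`, since
`Jᵀ g J = diag(H h H, h H h)`.
-/

namespace Matrix

variable {n m α : Type*} [Fintype n] [Fintype m] [DecidableEq n] [DecidableEq m] [Ring α]

theorem fromBlocks_zero_neg_mul_self {B : Matrix n m α} {C : Matrix m n α}
    (hBC : B * C = 1) (hCB : C * B = 1) :
    fromBlocks 0 (-B) C 0 * fromBlocks 0 (-B) C 0 = -1 := by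
  rw [fromBlocks_multiply, ← fromBlocks_one, fromBlocks_neg]
  simp [hBC, hCB]

theorem fromBlocks_zero_neg_transpose_mul_diagonal_mul {B C : Matrix n n α}
    (hB : B.IsSymm) (hC : C.IsSymm) (hCB : C * B = 1) :
    (fromBlocks 0 (-B) C 0)ᵀ * fromBlocks C 0 0 B * fromBlocks 0 (-B) C 0 =
      fromBlocks C 0 0 B := by
  rw [fromBlocks_transpose, transpose_zero, transpose_neg, hB.eq, hC.eq,
    fromBlocks_multiply, fromBlocks_multiply]
  simp [Matrix.mul_assoc, hCB]

end Matrix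

noncomputable section Lognormal

def lognormalFisher (θ₁ θ₂ : ℝ) : Matrix (Fin 2) (Fin 2) ℝ :=
  !![-1 / (2 * θ₂), θ₁ / (2 * θ₂ ^ 2); θ₁ / (2 * θ₂ ^ 2), -(θ₁ ^ 2 - θ₂) / (2 * θ₂ ^ 3)]

def lognormalDualFisher (θ₁ θ₂ : ℝ) : Matrix (Fin 2) (Fin 2) ℝ :=
  !![2 * θ₁ ^ 2 - 2 * θ₂, 2 * θ₁ * θ₂; 2 * θ₁ * θ₂, 2 * θ₂ ^ 2]

theorem lognormalFisher_isSymm (θ₁ θ₂ : ℝ) : (lognormalFisher θ₁ θ₂).IsSymm := by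
  ext i j
  fin_cases i <;> fin_cases j <;> rfl

theorem lognormalDualFisher_isSymm (θ₁ θ₂ : ℝ) : (lognormalDualFisher θ₁ θ₂).IsSymm := by
  ext i j
  fin_cases i <;> fin_cases j <;> rfl

theorem lognormalFisher_mul_lognormalDualFisher (θ₁ : ℝ) {θ₂ : ℝ} (hθ₂ : θ₂ ≠ 0) :
    lognormalFisher θ₁ θ₂ * lognormalDualFisher θ₁ θ₂ = 1 := by
  rw [lognormalFisher, lognormalDualFisher, mul_fin_two, one_fin_two]
  ext i j
  fin_cases i <;> fin_cases j <;> simp <;> field_simp <;> ring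

end Lognormal

/-- In the mixed coordinates `(η₁,η₂,θ̇₁,θ̇₂)`, the Kähler structure of the tangent
bundle of the lognormal manifold satisfies `J_d² = -I` and `J_dᵀ g_d J_d = g_d`, where
`g_d = diag(H, h)` and `J_d` has blocks `-h` (top right) and `H` (bottom left). -/
theorem lognormal_kahler_structure_eta_coords
    (θ₁ θ₂ : ℝ) (hθ₂ : θ₂ ≠ 0)
    (h H : Matrix (Fin 2) (Fin 2) ℝ)
    (hh : h = !![-1 / (2 * θ₂), θ₁ / (2 * θ₂ ^ 2);
                 θ₁ / (2 * θ₂ ^ 2), -(θ₁ ^ 2 - θ₂) / (2 * θ₂ ^ 3)])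
    (hH : H = !![2 * θ₁ ^ 2 - 2 * θ₂, 2 * θ₁ * θ₂;
                 2 * θ₁ * θ₂, 2 * θ₂ ^ 2])
    (gd Jd : Matrix (Fin 2 ⊕ Fin 2) (Fin 2 ⊕ Fin 2) ℝ)
    (hgd : gd = Matrix.fromBlocks H 0 0 h)
    (hJd : Jd = Matrix.fromBlocks 0 (-h) H 0) :
    Jd * Jd = -1 ∧ Jdᵀ * gd * Jd = gd := by
  have hhH : h * H = 1 := hh ▸ hH ▸ lognormalFisher_mul_lognormalDualFisher θ₁ hθ₂
  have hHh : H * h = 1 := mul_eq_one_comm.mp hhH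
  subst hgd hJd
  exact ⟨fromBlocks_zero_neg_mul_self hhH hHh,
    fromBlocks_zero_neg_transpose_mul_diagonal_mul (hh ▸ lognormalFisher_isSymm θ₁ θ₂)
      (hH ▸ lognormalDualFisher_isSymm θ₁ θ₂) hHh⟩
end
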